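/- arXiv:2312.16588 — 2 statements merged into one kernel-verified Lean document; each statement's English description precedes it below -/
import Mathlib

section
/- Let $\lambda > 0$, $1/2 < p < 1$ and $\varrho > 0$. There exists a constant $C > 0$ such that for all $t \geq 0$, $\int_0^t e^{-\lambda(t^p - \tau^p)}\, \tau^{p-1} (1+\tau)^{-(\varrho+p)}\, d\tau \leq C (1+t)^{-(\varrho+p)}$. -/
/-!
Split the integral at `t / 2`. On `[0, t/2]` we have `τᵖ ≤ tᵖ / 2ᵖ`, so the kernel is at most
`exp (-c tᵖ)` with `c = λ (1 - 2⁻ᵖ) > 0`, while `∫₀^{t/2} τ^(p-1) dτ ≤ tᵖ / p`; as `exp (-c tᵖ) tᵖ`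
decays faster than any power of `1 + t`, this part is `O((1 + t)^(-(ϱ+p)))`. On `[t/2, t]` the
weight is at most `(1 + t/2)^(-(ϱ+p)) ≤ 2^(ϱ+p) (1 + t)^(-(ϱ+p))`, and the kernel times `τ^(p-1)`
is the derivative of `exp (-λ (tᵖ - τᵖ)) / (λ p)`, so its integral is at most `1 / (λ p)`.
-/

open Real intervalIntegral
open scoped Nat

lemma exists_exp_neg_mul_rpow_le {s : ℝ} (hs : 0 ≤ s) :
    ∃ M, ∀ u : ℝ, 0 ≤ u → exp (-u) * u ^ s ≤ M := by
  set n := ⌈s⌉₊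
  refine ⟨1 + n !, fun u hu => ?_⟩
  have hpow : u ^ s ≤ 1 + u ^ n := by
    rcases le_total u 1 with hu1 | hu1
    · linarith [rpow_le_one hu hu1 hs, pow_nonneg hu n]
    · have := rpow_le_rpow_of_exponent_le hu1 (Nat.le_ceil s)
      rw [rpow_natCast] at this
      linarith
  have hfac : exp (-u) * u ^ n ≤ n ! :=
    calc exp (-u) * u ^ n ≤ exp (-u) * (exp u * n !) := by
          gcongr; rw [← div_le_iff₀ (by positivity)]; exact pow_div_factorial_le_exp u hu n
      _ = n ! := by rw [← mul_assoc, ← exp_add]; simp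
  calc exp (-u) * u ^ s ≤ exp (-u) * (1 + u ^ n) := by gcongr
    _ ≤ 1 + n ! := by linarith [exp_le_one_iff.2 (neg_nonpos.2 hu)]

lemma exists_exp_neg_mul_rpow_mul_rpow_le {c p r : ℝ} (hc : 0 < c) (hp : 0 < p) (hr : 0 ≤ r) :
    ∃ M, ∀ t : ℝ, 0 ≤ t → exp (-(c * t ^ p)) * t ^ r ≤ M := by
  obtain ⟨M, hM⟩ := exists_exp_neg_mul_rpow_le (div_nonneg hr hp.le)
  refine ⟨c ^ (-(r / p)) * M, fun t ht => ?_⟩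
  have hsubst : (c * t ^ p) ^ (r / p) = c ^ (r / p) * t ^ r := by
    rw [mul_rpow hc.le (rpow_nonneg ht p), ← rpow_mul ht, mul_div_cancel₀ r hp.ne']
  calc exp (-(c * t ^ p)) * t ^ r
      = c ^ (-(r / p)) * (exp (-(c * t ^ p)) * (c * t ^ p) ^ (r / p)) := by
        rw [hsubst, rpow_neg hc.le]; field_simp
    _ ≤ c ^ (-(r / p)) * M := by gcongr; exact hM _ (by positivity)

lemma one_add_rpow_le_two_rpow_mul {r t : ℝ} (hr : 0 ≤ r) (ht : 0 ≤ t) :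
    (1 + t) ^ r ≤ 2 ^ r * (1 + t ^ r) := by
  rcases le_total t 1 with ht1 | ht1
  · calc (1 + t) ^ r ≤ 2 ^ r := by gcongr; linarith
      _ ≤ 2 ^ r * (1 + t ^ r) := le_mul_of_one_le_right (by positivity) (by simp; positivity)
  · calc (1 + t) ^ r ≤ (2 * t) ^ r := by gcongr; linarith
      _ ≤ 2 ^ r * (1 + t ^ r) := by rw [mul_rpow zero_le_two ht]; gcongr; linarith

lemma exists_exp_neg_mul_rpow_mul_rpow_le_mul_one_add_rpow_neg {c p r q : ℝ} (hc : 0 < c)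
    (hp : 0 < p) (hr : 0 ≤ r) (hq : 0 ≤ q) :
    ∃ A, ∀ t : ℝ, 0 ≤ t → exp (-(c * t ^ p)) * t ^ r ≤ A * (1 + t) ^ (-q) := by
  obtain ⟨M₁, hM₁⟩ := exists_exp_neg_mul_rpow_mul_rpow_le hc hp hr
  obtain ⟨M₂, hM₂⟩ := exists_exp_neg_mul_rpow_mul_rpow_le hc hp (add_nonneg hr hq)
  refine ⟨2 ^ q * (M₁ + M₂), fun t ht => ?_⟩
  rw [rpow_neg (by positivity), ← div_eq_mul_inv, le_div_iff₀ (by positivity)]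
  calc exp (-(c * t ^ p)) * t ^ r * (1 + t) ^ q
      ≤ exp (-(c * t ^ p)) * t ^ r * (2 ^ q * (1 + t ^ q)) := by
        gcongr; exact one_add_rpow_le_two_rpow_mul hq ht
    _ = 2 ^ q * (exp (-(c * t ^ p)) * t ^ r + exp (-(c * t ^ p)) * t ^ (r + q)) := by
        rw [rpow_add_of_nonneg ht hr hq]; ring
    _ ≤ 2 ^ q * (M₁ + M₂) := by gcongr; exacts [hM₁ t ht, hM₂ t ht]

lemma one_add_half_rpow_neg_le {q t : ℝ} (hq : 0 ≤ q) (ht : 0 ≤ t) :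
    (1 + t / 2) ^ (-q) ≤ 2 ^ q * (1 + t) ^ (-q) :=
  calc (1 + t / 2) ^ (-q) = 2 ^ q * (2 ^ (-q) * (1 + t / 2) ^ (-q)) := by
        rw [← mul_assoc, ← rpow_add two_pos]; simp
    _ = 2 ^ q * (2 + t) ^ (-q) := by rw [← mul_rpow zero_le_two (by positivity)]; ring_nf
    _ ≤ 2 ^ q * (1 + t) ^ (-q) := by
        gcongr 2 ^ q * ?_
        exact rpow_le_rpow_of_nonpos (by positivity) (by linarith) (by linarith)

lemma hasDerivAt_exp_neg_mul_sub_rpow (lam b : ℝ) {p x : ℝ} (hx : x ≠ 0) :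
    HasDerivAt (fun τ => exp (-(lam * (b ^ p - τ ^ p))))
      (exp (-(lam * (b ^ p - x ^ p))) * (lam * (p * x ^ (p - 1)))) x := by
  simpa using
    (((hasDerivAt_rpow_const (p := p) (Or.inl hx)).const_sub (b ^ p)).const_mul lam).neg.exp

lemma intervalIntegrable_exp_neg_mul_sub_rpow_mul_rpow {lam p t : ℝ} (hp : 0 < p) (a b : ℝ) :
    IntervalIntegrable (fun τ => exp (-(lam * (t ^ p - τ ^ p))) * τ ^ (p - 1))
      MeasureTheory.volume a b := by
  have := continuous_rpow_const hp.le
  exact (intervalIntegrable_rpow' (by linarith)).continuousOn_mul (by fun_prop)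

lemma integral_exp_neg_mul_sub_rpow_mul_rpow_le {lam p a b : ℝ} (hlam : 0 < lam) (hp : 0 < p)
    (ha : 0 < a) (hb : 0 < b) :
    ∫ τ in a..b, exp (-(lam * (b ^ p - τ ^ p))) * τ ^ (p - 1) ≤ 1 / (lam * p) := by
  have hlp : lam * p ≠ 0 := by positivity
  have hderiv : ∀ x ∈ Set.uIcc a b,
      HasDerivAt (fun τ => exp (-(lam * (b ^ p - τ ^ p))) / (lam * p))
        (exp (-(lam * (b ^ p - x ^ p))) * x ^ (p - 1)) x := fun x hx => by
    refine ((hasDerivAt_exp_neg_mul_sub_rpow lam b (lt_min ha hb |>.trans_le hx.1).ne').div_const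
      (lam * p)).congr_deriv ?_
    field_simp
  rw [integral_eq_sub_of_hasDerivAt hderiv
    (intervalIntegrable_exp_neg_mul_sub_rpow_mul_rpow hp a b), sub_self, mul_zero, neg_zero,
    exp_zero, ← sub_div]
  gcongr
  linarith [exp_pos (-(lam * (b ^ p - a ^ p)))]

lemma intervalIntegrable_exp_neg_mul_sub_rpow_mul_rpow_mul_one_add_rpow {lam p q t a b : ℝ}
    (hp : 0 < p) (ha : 0 ≤ a) (hb : 0 ≤ b) :
    IntervalIntegrable (fun τ => exp (-(lam * (t ^ p - τ ^ p))) * τ ^ (p - 1) * (1 + τ) ^ (-q))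
      MeasureTheory.volume a b :=
  (intervalIntegrable_exp_neg_mul_sub_rpow_mul_rpow hp a b).mul_continuousOn <|
    (continuous_const_add 1).continuousOn.rpow_const fun x hx =>
      Or.inl (by linarith [le_min ha hb |>.trans hx.1])

lemma exists_integral_lower_half_le {lam p q : ℝ} (hlam : 0 < lam) (hp : 0 < p) (hq : 0 ≤ q) :
    ∃ A, ∀ t : ℝ, 0 ≤ t →
      ∫ τ in (0 : ℝ)..t / 2, exp (-(lam * (t ^ p - τ ^ p))) * τ ^ (p - 1) * (1 + τ) ^ (-q) ≤
        A * (1 + t) ^ (-q) := by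
  set c := lam * (1 - 1 / 2 ^ p)
  have hc : 0 < c :=
    mul_pos hlam (sub_pos.2 ((div_lt_one (by positivity)).2 (one_lt_rpow one_lt_two hp)))
  obtain ⟨A, hA⟩ := exists_exp_neg_mul_rpow_mul_rpow_le_mul_one_add_rpow_neg hc hp hp.le hq
  refine ⟨A / p, fun t ht => ?_⟩
  have hkernel : ∀ τ ∈ Set.Icc 0 (t / 2),
      exp (-(lam * (t ^ p - τ ^ p))) * τ ^ (p - 1) * (1 + τ) ^ (-q) ≤
        exp (-(c * t ^ p)) * τ ^ (p - 1) := by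
    rintro τ ⟨hτ₀, hτ⟩
    have hτp : τ ^ p ≤ t ^ p / 2 ^ p := by
      rw [← div_rpow ht zero_le_two]; exact rpow_le_rpow hτ₀ hτ hp.le
    calc exp (-(lam * (t ^ p - τ ^ p))) * τ ^ (p - 1) * (1 + τ) ^ (-q)
        ≤ exp (-(lam * (t ^ p - τ ^ p))) * τ ^ (p - 1) :=
          mul_le_of_le_one_right (by positivity)
            (rpow_le_one_of_one_le_of_nonpos (by linarith) (by linarith))
      _ ≤ exp (-(c * t ^ p)) * τ ^ (p - 1) := by
          gcongr ?_ * _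
          exact exp_le_exp.2 <| neg_le_neg <| by
            linear_combination mul_le_mul_of_nonneg_left hτp hlam.le
  calc _ ≤ ∫ τ in (0 : ℝ)..t / 2, exp (-(c * t ^ p)) * τ ^ (p - 1) :=
        integral_mono_on (by linarith)
          (intervalIntegrable_exp_neg_mul_sub_rpow_mul_rpow_mul_one_add_rpow hp le_rfl
            (by linarith))
          ((intervalIntegrable_rpow' (by linarith)).const_mul _) hkernel
    _ = exp (-(c * t ^ p)) * (t / 2) ^ p / p := by
        rw [integral_const_mul, integral_rpow (Or.inl (by linarith)), sub_add_cancel,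
          zero_rpow hp.ne']
        ring
    _ ≤ exp (-(c * t ^ p)) * t ^ p / p := by gcongr; linarith
    _ ≤ A * (1 + t) ^ (-q) / p := by gcongr ?_ / p; exact hA t ht
    _ = A / p * (1 + t) ^ (-q) := by ring

lemma integral_upper_half_le {lam p q t : ℝ} (hlam : 0 < lam) (hp : 0 < p) (hq : 0 ≤ q)
    (ht : 0 < t) :
    ∫ τ in t / 2..t, exp (-(lam * (t ^ p - τ ^ p))) * τ ^ (p - 1) * (1 + τ) ^ (-q) ≤
      2 ^ q / (lam * p) * (1 + t) ^ (-q) := by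
  have hweight : ∀ τ ∈ Set.Icc (t / 2) t,
      exp (-(lam * (t ^ p - τ ^ p))) * τ ^ (p - 1) * (1 + τ) ^ (-q) ≤
        (1 + t / 2) ^ (-q) * (exp (-(lam * (t ^ p - τ ^ p))) * τ ^ (p - 1)) := by
    rintro τ ⟨hτ, -⟩
    have hτ₀ : 0 < τ := by linarith
    rw [mul_comm]
    exact mul_le_mul_of_nonneg_right
      (rpow_le_rpow_of_nonpos (by linarith) (by linarith) (by linarith)) (by positivity)
  calc _ ≤ ∫ τ in t / 2..t,
          (1 + t / 2) ^ (-q) * (exp (-(lam * (t ^ p - τ ^ p))) * τ ^ (p - 1)) :=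
        integral_mono_on (by linarith)
          (intervalIntegrable_exp_neg_mul_sub_rpow_mul_rpow_mul_one_add_rpow hp (by linarith)
            ht.le)
          ((intervalIntegrable_exp_neg_mul_sub_rpow_mul_rpow hp _ _).const_mul _) hweight
    _ ≤ (1 + t / 2) ^ (-q) * (1 / (lam * p)) := by
        rw [integral_const_mul]
        gcongr
        exact integral_exp_neg_mul_sub_rpow_mul_rpow_le hlam hp (by linarith) ht
    _ ≤ 2 ^ q * (1 + t) ^ (-q) * (1 / (lam * p)) := by
        gcongr; exact one_add_half_rpow_neg_le hq ht.le
    _ = 2 ^ q / (lam * p) * (1 + t) ^ (-q) := by ring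

theorem decay_convolution_subexp_general (lam p ϱ : ℝ) (hlam : 0 < lam)
    (hp1 : 1 / 2 < p) (hϱ : 0 < ϱ) :
    ∃ C : ℝ, 0 < C ∧ ∀ t : ℝ, 0 ≤ t →
      (∫ τ in (0 : ℝ)..t,
          Real.exp (-(lam * (t ^ p - τ ^ p))) * τ ^ (p - 1) * (1 + τ) ^ (-(ϱ + p))) ≤
        C * (1 + t) ^ (-(ϱ + p)) := by
  have hp : 0 < p := by linarith
  have hq : 0 ≤ ϱ + p := by linarith
  obtain ⟨A, hA⟩ := exists_integral_lower_half_le hlam hp hq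
  refine ⟨max A 1 + 2 ^ (ϱ + p) / (lam * p), by positivity, fun t ht => ?_⟩
  rcases ht.eq_or_lt with rfl | ht
  · simp only [integral_same]; positivity
  rw [← integral_add_adjacent_intervals
    (intervalIntegrable_exp_neg_mul_sub_rpow_mul_rpow_mul_one_add_rpow (b := t / 2) hp le_rfl
      (by linarith))
    (intervalIntegrable_exp_neg_mul_sub_rpow_mul_rpow_mul_one_add_rpow hp (by linarith) ht.le),
    add_mul]
  gcongr ?_ + ?_
  · exact (hA t ht.le).trans (by gcongr; exact le_max_left _ _)
  · exact integral_upper_half_le hlam hp hq ht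

/-- for `λ > 0`, `1/2 < p < 1` and `ϱ > 0` there is `C > 0` such that for all
`t ≥ 0`, `∫₀ᵗ e^(-λ(tᵖ-τᵖ)) τ^(p-1) (1+τ)^(-(ϱ+p)) dτ ≤ C (1+t)^(-(ϱ+p))`. -/
theorem decay_convolution_subexp (lam p ϱ : ℝ) (hlam : 0 < lam)
    (hp1 : 1 / 2 < p) (hp2 : p < 1) (hϱ : 0 < ϱ) :
    ∃ C : ℝ, 0 < C ∧ ∀ t : ℝ, 0 ≤ t →
      (∫ τ in (0 : ℝ)..t,
          Real.exp (-(lam * (t ^ p - τ ^ p))) * τ ^ (p - 1) * (1 + τ) ^ (-(ϱ + p))) ≤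
        C * (1 + t) ^ (-(ϱ + p)) :=
  decay_convolution_subexp_general lam p ϱ hlam hp1 hϱ
end

section
/- Let $\lambda > 0$, $1/2 < p < 1$ and $1 < \varrho < 3/2$. There exists a constant $C > 0$ such that for all $t \geq 0$, $\int_0^t e^{-\lambda(t^p - \tau^p)} (1+\tau)^{-(1+\varrho)}\, d\tau \leq C (1+t)^{-(\varrho+p)}$. -/
/-!
Split `[0, t]` at `t / 2`. On `[0, t / 2]` the exponent `λ (tᵖ - τᵖ)` is at least
`λ (1 - 2⁻ᵖ) tᵖ` and `(1 + τ)^(-(1 + ϱ))` has integral at most `1 / ϱ`, so this part is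
`O(exp(-c tᵖ))`, which decays faster than any power of `1 + t`. On `[t / 2, t]`, concavity of
`τ ↦ τᵖ` gives `tᵖ - τᵖ ≥ p t^(p-1) (t - τ)`, so the exponential factor integrates to at most
`t^(1-p) / (λ p)`, while `(1 + τ)^(-(1 + ϱ)) ≤ 2^(1+ϱ) (1 + t)^(-(1 + ϱ))`; their product is
`O((1 + t)^(-(ϱ + p)))`.
-/

open Real MeasureTheory intervalIntegral Set

theorem exp_neg_le_mul_rpow_neg {s y : ℝ} (hs : 0 < s) (hy : 0 < y) :
    exp (-y) ≤ s ^ s * y ^ (-s) := by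
  have hys : y / s ≤ exp (y / s) := by linarith [add_one_le_exp (y / s)]
  have hpow : y ^ s ≤ s ^ s * exp y :=
    calc y ^ s = s ^ s * (y / s) ^ s := by
          rw [div_rpow hy.le hs.le, mul_div_cancel₀ _ (rpow_pos_of_pos hs s).ne']
      _ ≤ s ^ s * exp (y / s) ^ s := by gcongr
      _ = s ^ s * exp y := by rw [← exp_mul, div_mul_cancel₀ _ hs.ne']
  rw [exp_neg, rpow_neg hy.le, ← div_eq_mul_inv, le_div_iff₀ (rpow_pos_of_pos hy s),
    inv_mul_le_iff₀ (exp_pos y), mul_comm]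
  exact hpow

theorem exists_exp_neg_mul_rpow_le_s12 {c p a : ℝ} (hc : 0 < c) (hp0 : 0 < p) (hp1 : p ≤ 1)
    (ha : 0 < a) :
    ∃ C, 0 < C ∧ ∀ t, 0 ≤ t → exp (-(c * t ^ p)) ≤ C * (1 + t) ^ (-a) := by
  set s := a / p
  refine ⟨exp c * s ^ s * c ^ (-s), by positivity, fun t ht => ?_⟩
  have h1t : 0 < 1 + t := by linarith
  have hsub : (1 + t) ^ p ≤ 1 + t ^ p := by
    simpa using rpow_add_le_add_rpow zero_le_one ht hp0.le hp1
  calc exp (-(c * t ^ p)) ≤ exp c * exp (-(c * (1 + t) ^ p)) := by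
        rw [← exp_add, exp_le_exp]; nlinarith
    _ ≤ exp c * (s ^ s * (c * (1 + t) ^ p) ^ (-s)) := by
        gcongr; exact exp_neg_le_mul_rpow_neg (div_pos ha hp0) (by positivity)
    _ = exp c * s ^ s * c ^ (-s) * (1 + t) ^ (-a) := by
        rw [mul_rpow hc.le (by positivity), ← rpow_mul h1t.le, mul_neg, mul_div_cancel₀ _ hp0.ne']
        ring

theorem mul_rpow_sub_one_mul_le_rpow_sub_rpow {p τ t : ℝ} (hp0 : 0 ≤ p) (hp1 : p ≤ 1)
    (hτ : 0 ≤ τ) (ht : 0 < t) : p * t ^ (p - 1) * (t - τ) ≤ t ^ p - τ ^ p := by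
  have hbern := rpow_one_add_le_one_add_mul_self
    (by linarith [div_nonneg hτ ht.le] : -1 ≤ τ / t - 1) hp0 hp1
  rw [add_sub_cancel, div_rpow hτ ht.le, div_le_iff₀ (rpow_pos_of_pos ht p)] at hbern
  have : p * (t ^ p / t) * (t - τ) = -(p * (τ / t - 1) * t ^ p) := by field_simp; ring
  rw [rpow_sub_one ht.ne']
  linarith

theorem integral_exp_neg_mul_sub_le {c : ℝ} (hc : 0 < c) (a b : ℝ) :
    ∫ τ in a..b, exp (-(c * (b - τ))) ≤ 1 / c := by
  rw [integral_comp_sub_left (fun x => exp (-(c * x))), sub_self,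
    integral_comp_mul_left (fun x => exp (-x)) hc.ne', integral_comp_neg, integral_exp,
    mul_zero, neg_zero, exp_zero, smul_eq_mul, one_div]
  exact mul_le_of_le_one_right (inv_nonneg.2 hc.le) (by linarith [exp_pos (-(c * (b - a)))])

theorem integral_one_add_rpow_neg_le {s b : ℝ} (hs : 0 < s) (hb : 0 ≤ b) :
    ∫ τ in (0 : ℝ)..b, (1 + τ) ^ (-(1 + s)) ≤ 1 / s := by
  rw [integral_comp_add_left (fun u => u ^ (-(1 + s))), integral_rpow]
  · rw [show -(1 + s) + 1 = -s by ring, add_zero, one_rpow, div_neg, ← neg_div, neg_sub]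
    gcongr
    linarith [rpow_nonneg (by linarith : (0 : ℝ) ≤ 1 + b) (-s)]
  · refine Or.inr ⟨by linarith, fun h => ?_⟩
    rw [uIcc_of_le (by linarith)] at h
    linarith [h.1]

theorem continuousOn_one_add_rpow (r : ℝ) : ContinuousOn (fun τ : ℝ => (1 + τ) ^ r) (Ici 0) :=
  fun τ hτ => (ContinuousAt.rpow_const (by fun_prop)
    (Or.inl (by linarith [mem_Ici.1 hτ]))).continuousWithinAt

theorem uIcc_subset_Ici {α : Type*} [Lattice α] {a b c : α} (ha : c ≤ a) (hb : c ≤ b) :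
    uIcc a b ⊆ Ici c :=
  fun _ hx => (le_inf ha hb).trans hx.1

noncomputable def subexpConvIntegrand (lam p ϱ t τ : ℝ) : ℝ :=
  exp (-(lam * (t ^ p - τ ^ p))) * (1 + τ) ^ (-(1 + ϱ))

section subexpConvIntegrand

variable {lam p ϱ t : ℝ}

theorem intervalIntegrable_subexpConvIntegrand (hp : 0 ≤ p) {a b : ℝ} (ha : 0 ≤ a)
    (hb : 0 ≤ b) : IntervalIntegrable (subexpConvIntegrand lam p ϱ t) volume a b := by
  refine (ContinuousOn.mono ?_ (uIcc_subset_Ici ha hb)).intervalIntegrable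
  exact ((continuous_exp.comp (continuous_const.mul
    (continuous_const.sub (continuous_rpow_const hp))).neg).continuousOn).mul
    (continuousOn_one_add_rpow _)

theorem integral_subexpConvIntegrand_zero_half_le (hlam : 0 ≤ lam) (hp : 0 ≤ p) (hϱ : 0 < ϱ)
    (ht : 0 ≤ t) :
    ∫ τ in (0 : ℝ)..t / 2, subexpConvIntegrand lam p ϱ t τ ≤
      exp (-(lam * (1 - 2 ^ (-p)) * t ^ p)) / ϱ := by
  set E := exp (-(lam * (1 - 2 ^ (-p)) * t ^ p))
  have hpt : ∀ τ ∈ Icc 0 (t / 2), subexpConvIntegrand lam p ϱ t τ ≤ E * (1 + τ) ^ (-(1 + ϱ)) := by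
    intro τ hτ
    have hτp : τ ^ p ≤ 2 ^ (-p) * t ^ p := by
      rw [rpow_neg zero_le_two, ← div_eq_inv_mul, ← div_rpow ht zero_le_two]
      exact rpow_le_rpow hτ.1 hτ.2 hp
    unfold subexpConvIntegrand
    gcongr
    · exact rpow_nonneg (by linarith [hτ.1]) _
    · exact exp_le_exp.2 (by nlinarith)
  calc ∫ τ in (0 : ℝ)..t / 2, subexpConvIntegrand lam p ϱ t τ
      ≤ ∫ τ in (0 : ℝ)..t / 2, E * (1 + τ) ^ (-(1 + ϱ)) :=
        integral_mono_on (by linarith)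
          (intervalIntegrable_subexpConvIntegrand hp le_rfl (by linarith))
          ((continuousOn_const.mul (continuousOn_one_add_rpow _)).mono
            (uIcc_subset_Ici le_rfl (by linarith))).intervalIntegrable hpt
    _ = E * ∫ τ in (0 : ℝ)..t / 2, (1 + τ) ^ (-(1 + ϱ)) := integral_const_mul _ _
    _ ≤ E * (1 / ϱ) := by gcongr; exact integral_one_add_rpow_neg_le hϱ (by linarith)
    _ = E / ϱ := mul_one_div _ _

theorem integral_subexpConvIntegrand_half_self_le (hlam : 0 < lam) (hp0 : 0 < p) (hp1 : p ≤ 1)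
    (hϱ : -1 ≤ ϱ) (ht : 0 ≤ t) :
    ∫ τ in t / 2..t, subexpConvIntegrand lam p ϱ t τ ≤
      2 ^ (1 + ϱ) / (lam * p) * (1 + t) ^ (-(ϱ + p)) := by
  rcases ht.eq_or_lt with rfl | ht
  · simp only [zero_div, integral_same]
    positivity
  set κ := lam * p * t ^ (p - 1) with hκ_def
  have hκ : 0 < κ := by positivity
  have hpt : ∀ τ ∈ Icc (t / 2) t, subexpConvIntegrand lam p ϱ t τ ≤
      (1 + t / 2) ^ (-(1 + ϱ)) * exp (-(κ * (t - τ))) := by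
    intro τ hτ
    have htan := mul_rpow_sub_one_mul_le_rpow_sub_rpow (τ := τ) hp0.le hp1 (by linarith [hτ.1]) ht
    rw [subexpConvIntegrand, mul_comm]
    refine mul_le_mul (rpow_le_rpow_of_nonpos (by linarith) (by linarith [hτ.1]) (by linarith))
      (exp_le_exp.2 ?_) (exp_pos _).le (by positivity)
    have := mul_le_mul_of_nonneg_left htan hlam.le
    rw [hκ_def]
    linarith
  have hhalf : (1 + t / 2) ^ (-(1 + ϱ)) ≤ 2 ^ (1 + ϱ) * (1 + t) ^ (-(1 + ϱ)) :=
    calc (1 + t / 2) ^ (-(1 + ϱ)) ≤ ((1 + t) / 2) ^ (-(1 + ϱ)) :=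
          rpow_le_rpow_of_nonpos (by positivity) (by linarith) (by linarith)
      _ = 2 ^ (1 + ϱ) * (1 + t) ^ (-(1 + ϱ)) := by
          rw [div_rpow (by positivity) zero_le_two, rpow_neg zero_le_two, div_inv_eq_mul, mul_comm]
  have hκinv : 1 / κ ≤ (1 + t) ^ (1 - p) / (lam * p) := by
    calc 1 / κ = t ^ (1 - p) / (lam * p) := by
          rw [show 1 - p = -(p - 1) by ring, rpow_neg ht.le, hκ_def]; field_simp
      _ ≤ (1 + t) ^ (1 - p) / (lam * p) := by gcongr; linarith
  calc ∫ τ in t / 2..t, subexpConvIntegrand lam p ϱ t τ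
      ≤ ∫ τ in t / 2..t, (1 + t / 2) ^ (-(1 + ϱ)) * exp (-(κ * (t - τ))) :=
        integral_mono_on (by linarith)
          (intervalIntegrable_subexpConvIntegrand hp0.le (by linarith) ht.le)
          ((by fun_prop : Continuous fun τ => (1 + t / 2) ^ (-(1 + ϱ)) * exp (-(κ * (t - τ)))
            ).intervalIntegrable _ _) hpt
    _ = (1 + t / 2) ^ (-(1 + ϱ)) * ∫ τ in t / 2..t, exp (-(κ * (t - τ))) :=
        integral_const_mul _ _
    _ ≤ 2 ^ (1 + ϱ) * (1 + t) ^ (-(1 + ϱ)) * ((1 + t) ^ (1 - p) / (lam * p)) := by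
        refine mul_le_mul hhalf ((integral_exp_neg_mul_sub_le hκ _ _).trans hκinv)
          (integral_nonneg (by linarith) fun _ _ => (exp_pos _).le) (by positivity)
    _ = 2 ^ (1 + ϱ) / (lam * p) * (1 + t) ^ (-(ϱ + p)) := by
        rw [show -(ϱ + p) = -(1 + ϱ) + (1 - p) by ring, rpow_add (by linarith : (0 : ℝ) < 1 + t)]
        ring

end subexpConvIntegrand

theorem decay_convolution_subexp'_general (lam p ϱ : ℝ) (hlam : 0 < lam)
    (hp1 : 1 / 2 < p) (hp2 : p < 1) (hϱ1 : 1 < ϱ) :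
    ∃ C : ℝ, 0 < C ∧ ∀ t : ℝ, 0 ≤ t →
      (∫ τ in (0 : ℝ)..t, Real.exp (-(lam * (t ^ p - τ ^ p))) * (1 + τ) ^ (-(1 + ϱ))) ≤
        C * (1 + t) ^ (-(ϱ + p)) := by
  have hp0 : 0 < p := by linarith
  have hϱ : 0 < ϱ := by linarith
  have hgap : 0 < lam * (1 - 2 ^ (-p)) :=
    mul_pos hlam (sub_pos.2 (rpow_lt_one_of_one_lt_of_neg one_lt_two (neg_neg_of_pos hp0)))
  obtain ⟨C, hC, hdecay⟩ := exists_exp_neg_mul_rpow_le_s12 hgap hp0 hp2.le (by linarith : 0 < ϱ + p)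
  refine ⟨C / ϱ + 2 ^ (1 + ϱ) / (lam * p), by positivity, fun t ht => ?_⟩
  change ∫ τ in (0 : ℝ)..t, subexpConvIntegrand lam p ϱ t τ ≤ _
  rw [← integral_add_adjacent_intervals (b := t / 2)
    (intervalIntegrable_subexpConvIntegrand hp0.le le_rfl (by linarith))
    (intervalIntegrable_subexpConvIntegrand hp0.le (by linarith) ht)]
  calc _ ≤ exp (-(lam * (1 - 2 ^ (-p)) * t ^ p)) / ϱ +
        2 ^ (1 + ϱ) / (lam * p) * (1 + t) ^ (-(ϱ + p)) :=
        add_le_add (integral_subexpConvIntegrand_zero_half_le hlam.le hp0.le hϱ ht)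
          (integral_subexpConvIntegrand_half_self_le hlam hp0 hp2.le (by linarith) ht)
    _ ≤ C * (1 + t) ^ (-(ϱ + p)) / ϱ + 2 ^ (1 + ϱ) / (lam * p) * (1 + t) ^ (-(ϱ + p)) := by
        gcongr
        exact hdecay t ht
    _ = _ := by ring

/-- for `λ > 0`, `1/2 < p < 1` and `1 < ϱ < 3/2` there is `C > 0` such that
for all `t ≥ 0`, `∫₀ᵗ e^(-λ(tᵖ-τᵖ)) (1+τ)^(-(1+ϱ)) dτ ≤ C (1+t)^(-(ϱ+p))`. -/
theorem decay_convolution_subexp' (lam p ϱ : ℝ) (hlam : 0 < lam)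
    (hp1 : 1 / 2 < p) (hp2 : p < 1) (hϱ1 : 1 < ϱ) (hϱ2 : ϱ < 3 / 2) :
    ∃ C : ℝ, 0 < C ∧ ∀ t : ℝ, 0 ≤ t →
      (∫ τ in (0 : ℝ)..t, Real.exp (-(lam * (t ^ p - τ ^ p))) * (1 + τ) ^ (-(1 + ϱ))) ≤
        C * (1 + t) ^ (-(ϱ + p)) :=
  decay_convolution_subexp'_general lam p ϱ hlam hp1 hp2 hϱ1
end
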